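/- arXiv:1001.5400 — 10 statements merged into one kernel-verified Lean document; each statement's English description precedes it below -/
import Mathlib

section
/- Every member of V* contains continuum many pairwise disjoint members of V*. That is, for every [T]* ∈ V* there is a family of cardinality 2^ℵ₀ of pairwise disjoint sets in V*, each contained in [T]*. -/
open Set Cardinal

/-- The set of branches of the trimmed tree `T[A,α]`:
all `β` agreeing with `α` outside of `A`. -/
def branches (X : ℕ → Type) (A : Set ℕ) (α : ∀ i, X i) : Set (∀ i, X i) :=
  {β | ∀ n ∉ A, β n = α n}

/-- The family `V` of branch sets of trimmed trees. -/
def treeV (X : ℕ → Type) : Set (Set (∀ i, X i)) :=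
  {S | ∃ A α, A.Infinite ∧ S = branches X A α}

/-- `[T]*`: all `β` agreeing with `α` outside of `A`, up to finitely many exceptions. -/
def starBranches (X : ℕ → Type) (A : Set ℕ) (α : ∀ i, X i) : Set (∀ i, X i) :=
  {β | {n | n ∉ A ∧ β n ≠ α n}.Finite}

/-- The family `V*`. -/
def treeVstar (X : ℕ → Type) : Set (Set (∀ i, X i)) :=
  {S | ∃ A α, A.Infinite ∧ S = starBranches X A α}

/-- The ideal `d⁰(F)`. -/
def d0 {X : ℕ → Type} (F : Set (Set (∀ i, X i))) : Set (Set (∀ i, X i)) :=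
  {Y | ∀ W ∈ F, ∃ U ∈ F, U ⊆ W ∧ U ∩ Y = ∅}

/-- `α_s`: overwrite `α` by `s` on `{0,…,n-1}`. -/
def modifySeq (X : ℕ → Type) (n : ℕ) (s α : ∀ i, X i) : ∀ i, X i :=
  fun i => if i < n then s i else α i

/-- `add(d⁰(V))`: the least cardinality of a subfamily of `d⁰(V)` whose union
is not in `d⁰(V)`. -/
noncomputable def addd0 (X : ℕ → Type) : Cardinal :=
  sInf {c | ∃ G : Set (Set (∀ i, X i)), G ⊆ d0 (treeV X) ∧ ⋃₀ G ∉ d0 (treeV X) ∧ c = #G}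

theorem stmt2 (X : ℕ → Type) [∀ i, Nontrivial (X i)] :
    ∀ W ∈ treeVstar X, ∃ F : Set (Set (∀ i, X i)),
      F ⊆ treeVstar X ∧ (∀ U ∈ F, U ⊆ W) ∧
      (F.Pairwise fun U U' => Disjoint U U') ∧ #F = Cardinal.continuum := by
  classical
  rintro W ⟨A, α, hA, rfl⟩
  set E : ℕ → ℕ := fun n => ((Set.Infinite.natEmbedding A hA n : A) : ℕ) with hEdef
  have hEinj : Function.Injective E := by
    intro a b h
    exact (Set.Infinite.natEmbedding A hA).injective (Subtype.ext h)
  have hEA : ∀ n, E n ∈ A := fun n => (Set.Infinite.natEmbedding A hA n).2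
  choose y hy using fun i => exists_ne (α i)
  set D : ℕ → ℕ := fun k => E (2 * k + 1) with hDdef
  set B : Set ℕ := Set.range (fun k => E (2 * k)) with hBdef
  have hBA : B ⊆ A := by rintro _ ⟨k, rfl⟩; exact hEA _
  have hBinf : B.Infinite :=
    Set.infinite_range_of_injective (fun a b h => by
      have := hEinj h; omega)
  have hDinj : Function.Injective D := fun a b h => by
    have := hEinj h; omega
  have hDA : ∀ k, D k ∈ A := fun k => hEA _
  have hDB : ∀ k, D k ∉ B := by
    rintro k ⟨j, hj⟩
    have := hEinj hj
    omega
  set G : (ℕ → Bool) → ℕ → Bool := fun f k => f (Nat.unpair k).1 with hGdef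
  set αf : (ℕ → Bool) → ∀ i, X i := fun f i =>
    if h : ∃ k, D k = i ∧ G f k = true then y i else α i with hαfdef
  have hαfD : ∀ f k, αf f (D k) = if G f k = true then y (D k) else α (D k) := by
    intro f k
    by_cases hG : G f k = true
    · rw [if_pos hG]
      exact dif_pos ⟨k, rfl, hG⟩
    · rw [if_neg hG]
      refine dif_neg ?_
      rintro ⟨k', hk', hG'⟩
      exact hG (hDinj hk' ▸ hG')
  have hαfA : ∀ f i, i ∉ A → αf f i = α i := by
    intro f i hi
    refine dif_neg ?_
    rintro ⟨k, hk, -⟩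
    exact hi (hk ▸ hDA k)
  have hsub : ∀ f, starBranches X B (αf f) ⊆ starBranches X A α := by
    intro f β hβ
    refine Set.Finite.subset hβ ?_
    rintro i ⟨hiA, hne⟩
    exact ⟨fun hiB => hiA (hBA hiB), fun h => hne (h.trans (hαfA f i hiA))⟩
  have hdisj : ∀ f g : ℕ → Bool, f ≠ g →
      Disjoint (starBranches X B (αf f)) (starBranches X B (αf g)) := by
    intro f g hfg
    rw [Set.disjoint_left]
    intro β hβf hβg
    obtain ⟨n, hn⟩ : ∃ n, f n ≠ g n := by
      by_contra h
      push_neg at h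
      exact hfg (funext h)
    have hT : (Set.range fun m => D (Nat.pair n m)).Infinite :=
      Set.infinite_range_of_injective (fun a b h => by
        have h2 := hDinj h
        have := congrArg (fun x => (Nat.unpair x).2) h2
        simpa using this)
    have hS : ({i | i ∉ B ∧ β i ≠ αf f i} ∪ {i | i ∉ B ∧ β i ≠ αf g i}).Finite :=
      hβf.union hβg
    obtain ⟨i, ⟨m, rfl⟩, hiS⟩ := (hT.diff hS).nonempty
    simp only [Set.mem_union, Set.mem_setOf_eq, not_or, not_and, not_ne_iff] at hiS
    have hiB := hDB (Nat.pair n m)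
    have h1 : β (D (Nat.pair n m)) = αf f (D (Nat.pair n m)) := hiS.1 hiB
    have h2 : β (D (Nat.pair n m)) = αf g (D (Nat.pair n m)) := hiS.2 hiB
    have hGf : G f (Nat.pair n m) = f n := by simp [hGdef]
    have hGg : G g (Nat.pair n m) = g n := by simp [hGdef]
    have hne2 : αf f (D (Nat.pair n m)) ≠ αf g (D (Nat.pair n m)) := by
      rw [hαfD, hαfD, hGf, hGg]
      cases hfn : f n <;> cases hgn : g n
      · exact absurd (hfn.trans hgn.symm) hn
      · simpa using (hy (D (Nat.pair n m))).symm
      · simpa using hy (D (Nat.pair n m))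
      · exact absurd (hfn.trans hgn.symm) hn
    exact hne2 (h1 ▸ h2)
  have hmem : ∀ f : ℕ → Bool, αf f ∈ starBranches X B (αf f) := by
    intro f
    simp [starBranches]
  have hinj : Function.Injective (fun f : ℕ → Bool => starBranches X B (αf f)) := by
    intro f g h
    by_contra hfg
    have hd := hdisj f g hfg
    dsimp only at h
    rw [h] at hd
    exact Set.disjoint_left.mp hd (hmem g) (hmem g)
  refine ⟨Set.range fun f => starBranches X B (αf f), ?_, ?_, ?_, ?_⟩
  · rintro _ ⟨f, rfl⟩
    exact ⟨B, αf f, hBinf, rfl⟩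
  · rintro _ ⟨f, rfl⟩
    exact hsub f
  · rintro _ ⟨f, rfl⟩ _ ⟨g, rfl⟩ hne
    exact hdisj f g (fun h => hne (by rw [h]))
  · rw [Cardinal.mk_range_eq _ hinj]
    simp only [Cardinal.mk_arrow, Cardinal.mk_bool, Cardinal.mk_nat,
      Cardinal.lift_id]
    exact Cardinal.two_power_aleph0
end

section
/- (Fusion lemma) Let (T[A_n,α_n])_{n∈ω} be a sequence of trimmed trees such that for every n, [T[A_{n+1},α_{n+1}]] ⊆ [T[A_n,α_n]] and the first n+1 elements of A_{n+1} (in increasing order) coincide with the first n+1 elements of A_n. Then there exist C ∈ [ω]^ω and α ∈ ∏X_i such that [T[C,α]] ⊆ [T[A_n,α_n]] for every n ∈ ω. -/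
open Set Cardinal

/-!
A chain of trimmed trees is decreasing in both its sets `A n` and its branches, and the
values `α n i` stabilise in `n` as soon as `i` leaves `A n`. The fusion condition makes
the `k`-th element of `A n` constant for `n ≥ k`; these diagonal elements are exactly
`⋂ n, A n`, an infinite set, and the limit `γ i = α i i` gives the fused tree.
-/

theorem branches_subset_branches_iff {X : ℕ → Type} [∀ i, Nontrivial (X i)]
    {A B : Set ℕ} {α β : ∀ i, X i} :
    branches X B β ⊆ branches X A α ↔ B ⊆ A ∧ ∀ i ∉ A, β i = α i := by
  constructor
  · intro h
    have hβ : ∀ i ∉ A, β i = α i := fun i hi => h (fun _ _ => rfl) i hi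
    refine ⟨fun i hiB => ?_, hβ⟩
    by_contra hiA
    obtain ⟨y, hy⟩ := exists_ne (β i)
    have hupd : Function.update β i y ∈ branches X B β := fun m hm =>
      Function.update_of_ne (ne_of_mem_of_not_mem hiB hm).symm _ _
    have := h hupd i hiA
    rw [Function.update_self] at this
    exact hy (this.trans (hβ i hiA).symm)
  · rintro ⟨hBA, hβ⟩ γ hγ i hi
    rw [hγ i (fun hiB => hi (hBA hiB)), hβ i hi]

namespace Nat

variable {S : ℕ → Set ℕ}

theorem nth_eq_nth_diag (hnth : ∀ n, ∀ k ≤ n, nth (· ∈ S (n + 1)) k = nth (· ∈ S n) k)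
    {k m : ℕ} (hkm : k ≤ m) : nth (· ∈ S m) k = nth (· ∈ S k) k := by
  induction hkm with
  | refl => rfl
  | @step m hkm ih => rw [hnth m k hkm, ih]

variable (hinf : ∀ n, (S n).Infinite)
  (hnth : ∀ n, ∀ k ≤ n, nth (· ∈ S (n + 1)) k = nth (· ∈ S n) k)
include hinf hnth

theorem strictMono_nth_diag : StrictMono fun k => nth (· ∈ S k) k :=
  strictMono_nat_of_lt_succ fun k => by
    rw [← nth_eq_nth_diag hnth k.le_succ]
    exact nth_strictMono (p := (· ∈ S (k + 1))) (hinf (k + 1)) k.lt_succ_self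

theorem nth_diag_mem (hS : Antitone S) (k m : ℕ) : nth (· ∈ S k) k ∈ S m := by
  rcases le_total k m with h | h
  · rw [← nth_eq_nth_diag hnth h]
    exact nth_mem_of_infinite (p := (· ∈ S m)) (hinf m) k
  · exact hS h (nth_mem_of_infinite (hinf k) k)

theorem range_nth_diag_subset_iInter (hS : Antitone S) :
    range (fun k => nth (· ∈ S k) k) ⊆ ⋂ n, S n := by
  rintro _ ⟨k, rfl⟩
  exact mem_iInter.2 (nth_diag_mem hinf hnth hS k)

theorem infinite_iInter (hS : Antitone S) : (⋂ n, S n).Infinite :=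
  (infinite_range_of_injective (strictMono_nth_diag hinf hnth).injective).mono
    (range_nth_diag_subset_iInter hinf hnth hS)

theorem mem_iInter_of_mem_self (hS : Antitone S) {i : ℕ} (hi : i ∈ S i) : i ∈ ⋂ n, S n := by
  classical
  -- `i` is the `k`-th element of `S i` with `k = count ≤ i`, hence a diagonal element
  refine range_nth_diag_subset_iInter hinf hnth hS ⟨count (· ∈ S i) i, ?_⟩
  simp only
  rw [← nth_eq_nth_diag hnth (count_le _), nth_count hi]

end Nat

theorem stmt5 (X : ℕ → Type) [∀ i, Nontrivial (X i)]
    (A : ℕ → Set ℕ) (α : ℕ → ∀ i, X i) (hA : ∀ n, (A n).Infinite)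
    (hsub : ∀ n, branches X (A (n + 1)) (α (n + 1)) ⊆ branches X (A n) (α n))
    (hnth : ∀ n, ∀ k ≤ n, Nat.nth (· ∈ A (n + 1)) k = Nat.nth (· ∈ A n) k) :
    ∃ (C : Set ℕ) (γ : ∀ i, X i), C.Infinite ∧
      ∀ n, branches X C γ ⊆ branches X (A n) (α n) := by
  have hchain : Antitone fun n => branches X (A n) (α n) := antitone_nat_of_succ_le hsub
  have hstab : ∀ {n m}, n ≤ m → A m ⊆ A n ∧ ∀ i ∉ A n, α m i = α n i := fun h =>
    branches_subset_branches_iff.1 (hchain h)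
  have hAanti : Antitone A := fun _ _ h => (hstab h).1
  refine ⟨⋂ n, A n, fun i => α i i, Nat.infinite_iInter hA hnth hAanti,
    fun n => branches_subset_branches_iff.2 ⟨iInter_subset A n, fun i hi => ?_⟩⟩
  rcases le_total n i with h | h
  · exact (hstab h).2 i hi
  · have hii : i ∉ A i := fun hii =>
      hi (mem_iInter.1 (Nat.mem_iInter_of_mem_self hA hnth hAanti hii) n)
    exact ((hstab h).2 i hii).symm
end

section
/- If each X_i is a finite set with at least two points and Y ∈ d⁰(V), then Y* ∈ d⁰(V), where Y* = ⋃{Y_s : s a finite sequence}. -/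
open Set Cardinal

/-- `Y*`: all functions agreeing with some element of `Y` from some point on. -/
def starOf (X : ℕ → Type) (Y : Set (∀ i, X i)) : Set (∀ i, X i) :=
  {β | ∃ α ∈ Y, ∃ n, ∀ m, n ≤ m → β m = α m}

set_option linter.unusedSectionVars false
section
variable {X : ℕ → Type} [∀ i, Finite (X i)] [∀ i, Nontrivial (X i)]

lemma self_mem_branches (B : Set ℕ) (δ : ∀ i, X i) : δ ∈ branches X B δ := fun _ _ => rfl

lemma branches_subset_iff {B B' : Set ℕ} {δ δ' : ∀ i, X i}
    (h : branches X B' δ' ⊆ branches X B δ) :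
    B' ⊆ B ∧ ∀ i ∉ B, δ' i = δ i := by
  constructor
  · intro b hb
    by_contra hbB
    obtain ⟨x, hx⟩ := exists_ne (δ b)
    have hmem : Function.update δ' b x ∈ branches X B' δ' := by
      intro n hn
      have hne : n ≠ b := fun e => hn (e ▸ hb)
      simp [Function.update, hne]
    have h2 := h hmem b hbB
    simp [Function.update] at h2
    exact hx h2
  · exact fun i hi => h (self_mem_branches B' δ') i hi

lemma stage_ex {Y : Set (∀ i, X i)} (hY : Y ∈ d0 (treeV X)) (L : List (∀ i, X i)) :
    ∀ (B : Set ℕ) (δ : ∀ i, X i) (m : ℕ), B.Infinite →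
    ∃ (B' : Set ℕ) (δ' : ∀ i, X i), B'.Infinite ∧ B' ⊆ B ∧ (∀ i < m, i ∉ B') ∧
      (∀ i, i < m ∨ i ∉ B → δ' i = δ i) ∧
      ∀ s ∈ L, ∃ B₁ δ₁, B₁.Infinite ∧ branches X B₁ δ₁ ∩ Y = ∅ ∧ B' ⊆ B₁ ∧ B₁ ⊆ B ∧
        (∀ i < m, δ₁ i = s i) ∧ (∀ i ∉ B₁, m ≤ i → δ₁ i = δ' i) := by
  induction L with
  | nil =>
    intro B δ m hB
    exact ⟨B \ {i | i < m}, δ, hB.diff (finite_Iio m), diff_subset,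
      fun i hi hmem => hmem.2 hi, fun _ _ => rfl, by simp⟩
  | cons s L ih =>
    intro B δ m hB
    have hB2 : (B \ {i | i < m}).Infinite := hB.diff (finite_Iio m)
    have hW : branches X (B \ {i | i < m}) (modifySeq X m s δ) ∈ treeV X :=
      ⟨_, _, hB2, rfl⟩
    obtain ⟨U, hU, hUsub, hUY⟩ := hY _ hW
    obtain ⟨B₁, δ₁, hB₁inf, rfl⟩ := hU
    obtain ⟨hB₁sub, hδ₁⟩ := branches_subset_iff hUsub
    set δn : ∀ i, X i := fun i => if i < m then δ i else δ₁ i with hδn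
    obtain ⟨B', δ', h1, h2, h3, h4, h5⟩ := ih B₁ δn m hB₁inf
    have hB₁B : B₁ ⊆ B := hB₁sub.trans diff_subset
    have hpre : ∀ i < m, δ₁ i = s i := by
      intro i hi
      have : i ∉ B \ {i | i < m} := fun h => h.2 hi
      have := hδ₁ i this
      simpa [modifySeq, hi] using this
    refine ⟨B', δ', h1, h2.trans hB₁B, h3, ?_, ?_⟩
    · intro i hi
      have e1 : δ' i = δn i := by
        rcases hi with hi | hi
        · exact h4 i (Or.inl hi)
        · exact h4 i (Or.inr (fun h => hi (hB₁B h)))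
      rcases hi with hi | hi
      · rw [e1]; simp [δn, hi]
      · by_cases him : i < m
        · rw [e1]; simp [δn, him]
        · have hiB2 : i ∉ B \ {i | i < m} := fun h => hi h.1
          have := hδ₁ i hiB2
          rw [e1]
          simp only [δn, if_neg him]
          rw [this]
          simp [modifySeq, him]
    · intro t ht
      rcases List.mem_cons.1 ht with rfl | ht
      · refine ⟨B₁, δ₁, hB₁inf, hUY, h2, hB₁B, hpre, ?_⟩
        intro i hiB₁ him
        have e1 : δ' i = δn i := h4 i (Or.inr hiB₁)
        rw [e1]
        simp [δn, Nat.not_lt.2 him]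
      · obtain ⟨B₂, δ₂, k1, k2, k3, k4, k5, k6⟩ := h5 t ht
        exact ⟨B₂, δ₂, k1, k2, k3, k4.trans hB₁B, k5, k6⟩

noncomputable def allSeqs (X : ℕ → Type) [∀ i, Finite (X i)] [∀ i, Nontrivial (X i)]
    (m : ℕ) : List (∀ i, X i) :=
  letI : ∀ i, Inhabited (X i) := fun i => Classical.inhabited_of_nonempty inferInstance
  letI : Fintype (∀ i : Fin m, X i) := Fintype.ofFinite _
  (Finset.univ : Finset (∀ i : Fin m, X i)).toList.map
    (fun p i => if h : i < m then p ⟨i, h⟩ else default)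

lemma allSeqs_spec (m : ℕ) (y : ∀ i, X i) : ∃ s ∈ allSeqs X m, ∀ i < m, s i = y i := by
  unfold allSeqs
  refine ⟨_, List.mem_map.2 ⟨fun i : Fin m => y i, ?_, rfl⟩, ?_⟩
  · simp [Finset.mem_toList]
  · intro i hi; simp [hi]

lemma stage_pair {Y : Set (∀ i, X i)} (hY : Y ∈ d0 (treeV X))
    (B : Set ℕ) (δ : ∀ i, X i) (m : ℕ) (hB : B.Infinite) :
    ∃ p : Set ℕ × (∀ i, X i), p.1.Infinite ∧ p.1 ⊆ B ∧ (∀ i < m, i ∉ p.1) ∧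
      (∀ i, i < m ∨ i ∉ B → p.2 i = δ i) ∧
      ∀ s ∈ allSeqs X m, ∃ (B₁ : Set ℕ) (δ₁ : ∀ i, X i), B₁.Infinite ∧
        branches X B₁ δ₁ ∩ Y = ∅ ∧ p.1 ⊆ B₁ ∧ B₁ ⊆ B ∧
        (∀ i < m, δ₁ i = s i) ∧ (∀ i ∉ B₁, m ≤ i → δ₁ i = p.2 i) := by
  obtain ⟨B', δ', h⟩ := stage_ex hY (allSeqs X m) B δ m hB
  exact ⟨(B', δ'), h⟩

noncomputable def nxt {X : ℕ → Type} [∀ i, Finite (X i)] [∀ i, Nontrivial (X i)]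
    {Y : Set (∀ i, X i)} (hY : Y ∈ d0 (treeV X))
    (q : Set ℕ × (∀ i, X i) × ℕ) : Set ℕ × (∀ i, X i) × ℕ :=
  letI := Classical.propDecidable q.1.Infinite
  if h : q.1.Infinite then
    ((Classical.choose (stage_pair hY q.1 q.2.1 q.2.2 h)).1,
     (Classical.choose (stage_pair hY q.1 q.2.1 q.2.2 h)).2,
     sInf (Classical.choose (stage_pair hY q.1 q.2.1 q.2.2 h)).1 + 1)
  else q

lemma nxt_spec {Y : Set (∀ i, X i)} (hY : Y ∈ d0 (treeV X))
    (q : Set ℕ × (∀ i, X i) × ℕ) (h : q.1.Infinite) :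
    (nxt hY q).1.Infinite ∧ (nxt hY q).1 ⊆ q.1 ∧ (∀ i < q.2.2, i ∉ (nxt hY q).1) ∧
    (∀ i, i < q.2.2 ∨ i ∉ q.1 → (nxt hY q).2.1 i = q.2.1 i) ∧
    (∀ s ∈ allSeqs X q.2.2, ∃ (B₁ : Set ℕ) (δ₁ : ∀ i, X i), B₁.Infinite ∧
        branches X B₁ δ₁ ∩ Y = ∅ ∧ (nxt hY q).1 ⊆ B₁ ∧ B₁ ⊆ q.1 ∧
        (∀ i < q.2.2, δ₁ i = s i) ∧ (∀ i ∉ B₁, q.2.2 ≤ i → δ₁ i = (nxt hY q).2.1 i)) ∧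
    (nxt hY q).2.2 = sInf (nxt hY q).1 + 1 := by
  have hs := Classical.choose_spec (stage_pair hY q.1 q.2.1 q.2.2 h)
  simp only [nxt, dif_pos h]
  exact ⟨hs.1, hs.2.1, hs.2.2.1, hs.2.2.2.1, hs.2.2.2.2, trivial⟩

theorem stmt10 (X : ℕ → Type) [∀ i, Finite (X i)] [∀ i, Nontrivial (X i)]
    (Y : Set (∀ i, X i)) (hY : Y ∈ d0 (treeV X)) :
    starOf X Y ∈ d0 (treeV X) := by
  intro W hW
  obtain ⟨A, α, hA, rfl⟩ := hW
  -- the run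
  set run : ℕ → Set ℕ × (∀ i, X i) × ℕ := fun n => (nxt hY)^[n] (A, α, 0) with hrun
  set Bn : ℕ → Set ℕ := fun n => (run n).1 with hBn
  set dn : ℕ → (∀ i, X i) := fun n => (run n).2.1 with hdn
  set mn : ℕ → ℕ := fun n => (run n).2.2 with hmn
  have run_succ : ∀ n, run (n + 1) = nxt hY (run n) := by
    intro n
    simp [hrun, Function.iterate_succ_apply']
  have run0 : run 0 = (A, α, 0) := rfl
  -- infiniteness
  have inf : ∀ n, (Bn n).Infinite := by
    intro n
    induction n with
    | zero => exact hA
    | succ n ih =>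
      have h := (nxt_spec hY (run n) ih).1
      rw [← run_succ n] at h
      exact h
  have spec : ∀ n, (Bn (n+1)) ⊆ Bn n ∧ (∀ i < mn n, i ∉ Bn (n+1)) ∧
      (∀ i, i < mn n ∨ i ∉ Bn n → dn (n+1) i = dn n i) ∧
      (∀ s ∈ allSeqs X (mn n), ∃ (B₁ : Set ℕ) (δ₁ : ∀ i, X i), B₁.Infinite ∧
        branches X B₁ δ₁ ∩ Y = ∅ ∧ Bn (n+1) ⊆ B₁ ∧ B₁ ⊆ Bn n ∧
        (∀ i < mn n, δ₁ i = s i) ∧ (∀ i ∉ B₁, mn n ≤ i → δ₁ i = dn (n+1) i)) ∧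
      mn (n+1) = sInf (Bn (n+1)) + 1 := by
    intro n
    have h := nxt_spec hY (run n) (inf n)
    rw [← run_succ] at h
    exact ⟨h.2.1, h.2.2.1, h.2.2.2.1, h.2.2.2.2.1, h.2.2.2.2.2⟩
  -- monotonicity of B
  have Bmono : ∀ {n n'}, n ≤ n' → Bn n' ⊆ Bn n := by
    intro n n' h
    induction n' with
    | zero => cases Nat.le_zero.1 h; exact fun _ => id
    | succ k ih =>
      rcases Nat.lt_or_ge n (k+1) with hlt | hge
      · exact ((spec k).1).trans (ih (Nat.lt_succ_iff.1 hlt))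
      · cases le_antisymm h hge; exact fun _ => id
  have BsubA : ∀ n, Bn n ⊆ A := fun n => Bmono (Nat.zero_le n)
  -- c and m facts
  set c : ℕ → ℕ := fun n => sInf (Bn (n+1)) with hc
  have c_mem : ∀ n, c n ∈ Bn (n+1) := fun n => Nat.sInf_mem (inf (n+1)).nonempty
  have c_ge : ∀ n, mn n ≤ c n := by
    intro n
    by_contra hlt
    exact (spec n).2.1 (c n) (Nat.lt_of_not_le hlt) (c_mem n)
  have m_succ : ∀ n, mn (n+1) = c n + 1 := fun n => (spec n).2.2.2.2
  have m_lt : ∀ n, mn n < mn (n+1) := by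
    intro n; rw [m_succ n]; exact Nat.lt_succ_of_le (c_ge n)
  have m_mono : ∀ {n n'}, n ≤ n' → mn n ≤ mn n' := by
    intro n n' h
    induction n' with
    | zero => cases Nat.le_zero.1 h; exact le_rfl
    | succ k ih =>
      rcases Nat.lt_or_ge n (k+1) with hlt | hge
      · exact (ih (Nat.lt_succ_iff.1 hlt)).trans (m_lt k).le
      · cases le_antisymm h hge; exact le_rfl
  have m_ge : ∀ n, n ≤ mn n := by
    intro n
    induction n with
    | zero => exact Nat.zero_le _
    | succ k ih => exact Nat.succ_le_of_lt (Nat.lt_of_le_of_lt ih (m_lt k))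
  have c_mono : StrictMono c := by
    apply strictMono_nat_of_lt_succ
    intro n
    have : mn (n+1) ≤ c (n+1) := c_ge (n+1)
    rw [m_succ n] at this
    exact this
  -- stability of δ
  have S4 : ∀ n n', n ≤ n' → ∀ i, (i < mn n ∨ i ∉ Bn n) → dn n' i = dn n i := by
    intro n n' h
    induction n', h using Nat.le_induction with
    | base => intro i _; rfl
    | succ k hk ih =>
      intro i hi
      have step : dn (k+1) i = dn k i := by
        apply (spec k).2.2.1
        rcases hi with hi | hi
        · exact Or.inl (Nat.lt_of_lt_of_le hi (m_mono hk))
        · exact Or.inr (fun hmem => hi (Bmono hk hmem))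
      rw [step]; exact ih i hi
  set γ : ∀ i, X i := fun i => dn (i+1) i with hγ
  have G : ∀ n i, (i < mn n ∨ i ∉ Bn n) → γ i = dn n i := by
    intro n i hi
    rcases le_total n (i+1) with h | h
    · exact S4 n (i+1) h i hi
    · exact (S4 (i+1) n h i (Or.inl (Nat.lt_of_lt_of_le (Nat.lt_succ_self i) (m_ge (i+1))))).symm
  -- the final branch set
  set C : Set ℕ := Set.range c with hC
  have Cinf : C.Infinite := Set.infinite_range_of_injective c_mono.injective
  have CsubA : C ⊆ A := by
    rintro _ ⟨n, rfl⟩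
    exact BsubA (n+1) (c_mem n)
  have γA : ∀ i ∉ A, γ i = α i := by
    intro i hi
    have := G 0 i (Or.inr hi)
    rwa [show dn 0 = α from rfl] at this
  refine ⟨branches X C γ, ⟨C, γ, Cinf, rfl⟩, ?_, ?_⟩
  · intro β hβ i hi
    rw [hβ i (fun h => hi (CsubA h)), γA i hi]
  · rw [Set.eq_empty_iff_forall_notMem]
    rintro β ⟨hβU, y, hyY, n₀, hagree⟩
    obtain ⟨s, hsL, hs⟩ := allSeqs_spec (X := X) (mn n₀) y
    obtain ⟨B₁, δ₁, hB₁inf, hdisj, hsubB', hsubB, hpre, hag⟩ := (spec n₀).2.2.2.1 s hsL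
    have hyB₁ : y ∈ branches X B₁ δ₁ := by
      intro i hiB₁
      rcases Nat.lt_or_ge i (mn n₀) with him | him
      · rw [hpre i him, hs i him]
      · have hiC : i ∉ C := by
          rintro ⟨j, rfl⟩
          rcases Nat.lt_or_ge j n₀ with hj | hj
          · have h1 : mn (j+1) = c j + 1 := m_succ j
            have h2 : mn (j+1) ≤ mn n₀ := m_mono hj
            omega
          · exact hiB₁ (hsubB' (Bmono (Nat.succ_le_succ hj) (c_mem j)))
        have h1 : y i = β i := (hagree i (le_trans (m_ge n₀) him)).symm
        have h2 : β i = γ i := hβU i hiC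
        have h3 : γ i = dn (n₀+1) i := G (n₀+1) i (Or.inr (fun h => hiB₁ (hsubB' h)))
        rw [h1, h2, h3, hag i hiB₁ him]
    rw [Set.eq_empty_iff_forall_notMem] at hdisj
    exact hdisj y ⟨hyB₁, hyY⟩
end
end

section
/- For trimmed trees P, T: [P]* ⊆ [T]* if and only if δ(P)(k) ⊆ δ(T)(k) for all but finitely many k ∈ ω. -/
open Set Cardinal

/-- `δ(T[A,α])(n)`: `X n` for `n ∈ A`, and `{α n}` otherwise. -/
noncomputable def delta (X : ℕ → Type) (A : Set ℕ) (α : ∀ i, X i) : ∀ n, Set (X n) := by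
  classical exact fun n => if n ∈ A then Set.univ else {α n}

theorem stmt11 (X : ℕ → Type) [∀ i, Nontrivial (X i)] (A B : Set ℕ)
    (hA : A.Infinite) (hB : B.Infinite) (α β : ∀ i, X i) :
    starBranches X A α ⊆ starBranches X B β ↔
      {k | ¬ delta X A α k ⊆ delta X B β k}.Finite := by
  classical
  constructor
  · intro h
    have hα : α ∈ starBranches X A α := by simp [starBranches]
    have hαB := h hα
    have hAB : (A \ B).Finite := by
      by_contra hinf
      rw [← Set.not_infinite, not_not] at hinf
      choose γ hγ using fun n => exists_ne (β n)
      set γ' : ∀ i, X i := fun i => if i ∈ A \ B then γ i else α i with hγ'def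
      have hγ'A : γ' ∈ starBranches X A α := by
        have he : {n | n ∉ A ∧ γ' n ≠ α n} = ∅ := by
          ext n
          simp only [Set.mem_setOf_eq, Set.mem_empty_iff_false, iff_false, not_and, not_not]
          intro hn
          simp [hγ'def, Set.mem_diff, hn]
        simp [starBranches, he]
      have hfin := h hγ'A
      refine hinf (hfin.subset fun n hn => ⟨hn.2, ?_⟩)
      show (if n ∈ A \ B then γ n else α n) ≠ β n
      rw [if_pos hn]
      exact hγ n
    apply (hAB.union hαB).subset
    intro k hk
    simp only [Set.mem_setOf_eq, delta] at hk
    by_cases hkA : k ∈ A <;> by_cases hkB : k ∈ B <;>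
      simp only [hkA, hkB, if_pos, if_neg, if_true, if_false] at hk
    · exact absurd (Set.subset_univ _) hk
    · exact Or.inl ⟨hkA, hkB⟩
    · exact absurd (Set.subset_univ _) hk
    · refine Or.inr ⟨hkB, ?_⟩
      intro he
      exact hk (by rw [he])
  · intro h γ hγ
    have hfin : ({k | ¬ delta X A α k ⊆ delta X B β k} ∪
        {n | n ∉ A ∧ γ n ≠ α n}).Finite := h.union hγ
    apply hfin.subset
    rintro n ⟨hnB, hne⟩
    by_cases hnA : n ∈ A
    · left
      simp only [Set.mem_setOf_eq, delta, if_pos hnA, if_neg hnB]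
      intro hsub
      obtain ⟨x, hx⟩ := exists_ne (β n)
      exact hx (hsub (Set.mem_univ x))
    · by_cases hγα : γ n = α n
      · left
        simp only [Set.mem_setOf_eq, delta, if_neg hnA, if_neg hnB,
          Set.singleton_subset_iff, Set.mem_singleton_iff]
        rw [hγα] at hne
        exact hne
      · right
        exact ⟨hnA, hγα⟩
end

section
/- If P, T are trimmed trees with [P]* ⊆ [T]*, then for every n ∈ ω there exists a trimmed tree Q such that [Q] ⊆ [T], [Q]* = [P]*, and the first n+1 elements of the splitting set of Q coincide with those of T. -/
open Set Cardinal

open Classical in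
/-- If two predicates agree up to `nth q n`, their first `n+1` `nth` values agree. -/
lemma nth_congr_aux {p q : ℕ → Prop} (hq : (setOf q).Infinite)
    (hagree : ∀ m ≤ Nat.nth q n, (p m ↔ q m)) :
    ∀ k ≤ n, Nat.nth p k = Nat.nth q k := by
  intro k hk
  set m := Nat.nth q k with hm
  have hqm : q m := Nat.nth_mem_of_infinite hq k
  have hmn : m ≤ Nat.nth q n := (Nat.nth_le_nth hq).mpr hk
  have hpm : p m := (hagree m hmn).mpr hqm
  have hcount : Nat.count p m = Nat.count q m := by
    rw [Nat.count_eq_card_filter_range, Nat.count_eq_card_filter_range]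
    congr 1
    apply Finset.filter_congr
    intro i hi
    simp only [Finset.mem_range] at hi
    have : i ≤ Nat.nth q n := le_trans (le_of_lt hi) hmn
    simp [hagree i this]
  have hcq : Nat.count q m = k := Nat.count_nth_of_infinite hq k
  have := Nat.nth_count hpm
  rw [hcount, hcq] at this
  exact this

/-- One-sided star-branches inclusion from finite differences. -/
lemma star_subset_aux {X : ℕ → Type} {C B : Set ℕ} {γ β : ∀ i, X i}
    (h1 : (C \ B).Finite) (h2 : {m | γ m ≠ β m}.Finite) :
    starBranches X C γ ⊆ starBranches X B β := by
  intro b hb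
  have hb' : {m | m ∉ C ∧ b m ≠ γ m}.Finite := hb
  have : {m | m ∉ B ∧ b m ≠ β m} ⊆
      {m | m ∉ C ∧ b m ≠ γ m} ∪ (C \ B) ∪ {m | γ m ≠ β m} := by
    intro m hm
    obtain ⟨hmB, hmb⟩ := hm
    by_cases hmC : m ∈ C
    · exact Or.inl (Or.inr ⟨hmC, hmB⟩)
    · by_cases hg : b m = γ m
      · exact Or.inr (fun hgb => hmb (hg.trans hgb))
      · exact Or.inl (Or.inl ⟨hmC, hg⟩)
  exact Set.Finite.subset (((hb'.union h1).union h2)) this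

theorem stmt12 (X : ℕ → Type) [∀ i, Nontrivial (X i)]
    (A B : Set ℕ) (hA : A.Infinite) (hB : B.Infinite) (α β : ∀ i, X i)
    (h : starBranches X B β ⊆ starBranches X A α) (n : ℕ) :
    ∃ (C : Set ℕ) (γ : ∀ i, X i), C.Infinite ∧
      branches X C γ ⊆ branches X A α ∧
      starBranches X C γ = starBranches X B β ∧
      ∀ k ≤ n, Nat.nth (· ∈ C) k = Nat.nth (· ∈ A) k := by
  classical
  -- Step 1: {m ∉ A | β m ≠ α m} is finite
  have hbeta : {m | m ∉ A ∧ β m ≠ α m}.Finite := by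
    apply h
    show {m | m ∉ B ∧ β m ≠ β m}.Finite
    simp
  -- Step 2: B \ A is finite
  have hBA : (B \ A).Finite := by
    by_contra hinf
    set β' : ∀ i, X i := fun m =>
      if m ∈ B \ A then Classical.choose (exists_ne (α m)) else β m with hβ'
    have hβ'mem : β' ∈ starBranches X B β := by
      show {m | m ∉ B ∧ β' m ≠ β m}.Finite
      apply Set.Finite.subset (Set.finite_empty)
      intro m ⟨hmB, hm⟩
      have hnot : m ∉ B \ A := fun h' => hmB h'.1
      exact hm (by simp only [hβ', if_neg hnot])
    have := h hβ'mem
    have hsub : B \ A ⊆ {m | m ∉ A ∧ β' m ≠ α m} := by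
      intro m hm
      refine ⟨hm.2, ?_⟩
      simp only [hβ', if_pos hm]
      exact Classical.choose_spec (exists_ne (α m))
    exact hinf (this.subset hsub)
  -- The construction
  set aN := Nat.nth (· ∈ A) n with haN
  set C : Set ℕ := {m | m ∈ A ∧ (m ≤ aN ∨ m ∈ B)} with hC
  set γ : ∀ i, X i := fun m => if m ∈ A then β m else α m with hγ
  have hAB : (A ∩ B).Infinite := by
    apply (hB.diff hBA).mono
    intro m hm
    refine ⟨?_, hm.1⟩
    by_contra h'
    exact hm.2 ⟨hm.1, h'⟩
  have hCinf : C.Infinite :=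
    hAB.mono (fun m hm => ⟨hm.1, Or.inr hm.2⟩)
  have hgb : {m | γ m ≠ β m}.Finite := by
    apply hbeta.subset
    intro m hm
    simp only [hγ, Set.mem_setOf_eq] at hm ⊢
    by_cases hmA : m ∈ A
    · simp [hmA] at hm
    · refine ⟨hmA, ?_⟩
      simp [hmA] at hm
      exact fun he => hm he.symm
  refine ⟨C, γ, hCinf, ?_, ?_, ?_⟩
  · -- branches ⊆ branches
    intro b hb m hmA
    have hmC : m ∉ C := fun hm => hmA hm.1
    have := hb m hmC
    rw [this]
    simp [hγ, hmA]
  · -- starBranches equal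
    apply Set.Subset.antisymm
    · apply star_subset_aux _ hgb
      · apply Set.Finite.subset (Set.finite_Iic aN)
        intro m hm
        rcases hm.1.2 with h1 | h1
        · exact h1
        · exact absurd h1 hm.2
    · apply star_subset_aux _ (hgb.subset (by intro m; simp; tauto) :
        {m | β m ≠ γ m}.Finite)
      · apply hBA.subset
        intro m hm
        exact ⟨hm.1, fun hmA => hm.2 ⟨hmA, Or.inr hm.1⟩⟩
  · -- nth agreement
    apply nth_congr_aux hA
    intro m hm
    constructor
    · intro hmC; exact hmC.1
    · intro hmA; exact ⟨hmA, Or.inl hm⟩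
end

section
/- (Counterpart of Hadamard's theorem) If (W_n)_{n∈ω} is a decreasing sequence of elements of V* (W_{n+1} ⊆ W_n for all n), then there exists W ∈ V* with W ⊆ W_n for all n ∈ ω. (No finiteness of the X_i is required.) -/
open Set Cardinal

lemma sub_extract {X : ℕ → Type} [∀ i, Nontrivial (X i)] {A B : Set ℕ} {α γ : ∀ i, X i}
    (h : starBranches X A α ⊆ starBranches X B γ) :
    (A \ B).Finite ∧ {k | k ∉ B ∧ α k ≠ γ k}.Finite := by
  classical
  constructor
  · set β : ∀ i, X i := fun k => if k ∈ A \ B then (exists_ne (γ k)).choose else α k with hβdef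
    have hβmem : β ∈ starBranches X A α := by
      show {n | n ∉ A ∧ β n ≠ α n}.Finite
      refine Set.finite_empty.subset ?_
      rintro k ⟨hk, hne⟩
      exact hne (if_neg (fun hm => hk hm.1))
    have hfin : {k | k ∉ B ∧ β k ≠ γ k}.Finite := h hβmem
    refine hfin.subset ?_
    rintro k hk
    refine ⟨hk.2, ?_⟩
    rw [show β k = (exists_ne (γ k)).choose from if_pos hk]
    exact (exists_ne (γ k)).choose_spec
  · have hα : α ∈ starBranches X A α := by
      show {n | n ∉ A ∧ α n ≠ α n}.Finite
      refine Set.finite_empty.subset ?_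
      rintro k ⟨_, hne⟩
      exact hne rfl
    exact h hα

lemma exists_strictMono_mem (I : ℕ → Set ℕ) (hI : ∀ n, (I n).Infinite) :
    ∃ f : ℕ → ℕ, StrictMono f ∧ ∀ n, f n ∈ I n := by
  classical
  let f : ℕ → ℕ := fun n => Nat.rec ((hI 0).exists_gt 0).choose
    (fun n fn => ((hI (n+1)).exists_gt fn).choose) n
  have hf0 : f 0 ∈ I 0 := ((hI 0).exists_gt 0).choose_spec.1
  have hfs : ∀ n, f (n+1) ∈ I (n+1) ∧ f n < f (n+1) := fun n =>
    ⟨((hI (n+1)).exists_gt (f n)).choose_spec.1,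
     ((hI (n+1)).exists_gt (f n)).choose_spec.2⟩
  refine ⟨f, strictMono_nat_of_lt_succ fun n => (hfs n).2, fun n => ?_⟩
  cases n with
  | zero => exact hf0
  | succ n => exact (hfs n).1

theorem stmt13 (X : ℕ → Type) [∀ i, Nontrivial (X i)]
    (W : ℕ → Set (∀ i, X i)) (hW : ∀ n, W n ∈ treeVstar X)
    (hdec : ∀ n, W (n + 1) ⊆ W n) :
    ∃ U ∈ treeVstar X, ∀ n, U ⊆ W n := by
  classical
  choose A' α' hA hEq using hW
  have hanti : Antitone W := antitone_nat_of_succ_le hdec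
  set E : ℕ → ℕ → Set ℕ := fun m n => {k | k ∉ A' m ∧ α' n k ≠ α' m k} with hE
  have hsub : ∀ m n, m ≤ n → (A' n \ A' m).Finite ∧ (E m n).Finite := by
    intro m n hmn
    have h1 : starBranches X (A' n) (α' n) ⊆ starBranches X (A' m) (α' m) := by
      rw [← hEq n, ← hEq m]; exact hanti hmn
    exact sub_extract h1
  -- pseudo-intersection
  have hI : ∀ n, {k | ∀ m, m ≤ n → k ∈ A' m}.Infinite := by
    intro n
    have hS : (⋃ m ∈ Set.Iic n, (A' n \ A' m)).Finite :=
      (Set.finite_Iic n).biUnion (fun m hm => (hsub m n hm).1)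
    refine ((hA n).diff hS).mono ?_
    rintro k ⟨hk1, hk2⟩ m hm
    by_contra hkm
    exact hk2 (Set.mem_biUnion hm ⟨hk1, hkm⟩)
  obtain ⟨f, hfmono, hfmem⟩ := exists_strictMono_mem _ hI
  have hAinf : (Set.range f).Infinite := Set.infinite_range_of_injective hfmono.injective
  have hAdiff : ∀ m, (Set.range f \ A' m).Finite := by
    intro m
    refine ((Set.finite_Iio m).image f).subset ?_
    rintro k ⟨⟨n, rfl⟩, hkm⟩
    have hn : n < m := by
      by_contra hn
      push_neg at hn
      exact hkm (hfmem n m hn)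
    exact ⟨n, hn, rfl⟩
  -- bounds
  have hbex : ∀ n, ∃ b, ∀ m, m ≤ n → ∀ k ∈ E m n, k ≤ b := by
    intro n
    have hfin : (⋃ m ∈ Set.Iic n, E m n).Finite :=
      (Set.finite_Iic n).biUnion fun m hm => (hsub m n hm).2
    obtain ⟨b, hb⟩ := hfin.bddAbove
    exact ⟨b, fun m hm k hk => hb (Set.mem_biUnion hm hk)⟩
  choose b hbspec using hbex
  set N : ℕ → ℕ := fun n => Nat.rec 0 (fun n Nn => max (Nn + 1) (b (n+1) + 1)) n with hNdef
  have hN0 : N 0 = 0 := rfl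
  have hNs : ∀ n, N (n+1) = max (N n + 1) (b (n+1) + 1) := fun n => rfl
  have hNmono : StrictMono N := by
    refine strictMono_nat_of_lt_succ fun n => ?_
    rw [hNs]
    exact lt_of_lt_of_le (Nat.lt_succ_self _) (le_max_left _ _)
  have hEk : ∀ n m k, m ≤ n → k ∈ E m n → k < N n := by
    intro n m k hmn hk
    cases n with
    | zero =>
      interval_cases m
      exact absurd rfl hk.2
    | succ n =>
      rw [hNs]
      exact lt_of_lt_of_le (Nat.lt_succ_of_le (hbspec (n+1) m hmn k hk)) (le_max_right _ _)
  set g : ℕ → ℕ := fun k => Nat.findGreatest (fun n => N n ≤ k) k with hgdef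
  have hg1 : ∀ k, N (g k) ≤ k := by
    intro k
    have h0 : N 0 ≤ k := hN0 ▸ Nat.zero_le k
    exact Nat.findGreatest_spec (P := fun n => N n ≤ k) (Nat.zero_le k) h0
  have hg2 : ∀ k, k < N (g k + 1) := by
    intro k
    by_cases h : g k + 1 ≤ k
    · have := Nat.findGreatest_is_greatest (Nat.lt_succ_self (g k)) h
      exact not_le.mp this
    · push_neg at h
      exact h.trans_le hNmono.le_apply
  set αnew : ∀ i, X i := fun k => α' (g k) k with hαnew
  have hDm : ∀ m k, N m ≤ k → k ∉ A' m → αnew k = α' m k := by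
    intro m k hNk hkA
    have hm : m ≤ g k := by
      by_contra h
      push_neg at h
      have h1 : k < N m := lt_of_lt_of_le (hg2 k) (hNmono.monotone h)
      exact absurd hNk (not_le.mpr h1)
    by_contra hne
    have hkE : k ∈ E m (g k) := ⟨hkA, hne⟩
    exact absurd (hg1 k) (not_le.mpr (hEk (g k) m k hm hkE))
  refine ⟨starBranches X (Set.range f) αnew, ⟨Set.range f, αnew, hAinf, rfl⟩, ?_⟩
  intro m
  rw [hEq m]
  intro β hβ
  have hβ' : {k | k ∉ Set.range f ∧ β k ≠ αnew k}.Finite := hβ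
  show {k | k ∉ A' m ∧ β k ≠ α' m k}.Finite
  refine (((hAdiff m).union hβ').union (Set.finite_Iio (N m))).subset ?_
  rintro k ⟨hkA, hkβ⟩
  by_cases h1 : k < N m
  · exact Or.inr h1
  · push_neg at h1
    by_cases h2 : k ∈ Set.range f
    · exact Or.inl (Or.inl ⟨h2, hkA⟩)
    · refine Or.inl (Or.inr ⟨h2, ?_⟩)
      intro heq
      exact hkβ (heq.trans (hDm m k h1 hkA))
end

section
/- If [P]* and [Q]* are members of V* whose intersection [P]* ∩ [Q]* is uncountable, then [P]* ∩ [Q]* ∈ V*; moreover in this case there exist finite sequences s, t such that P_s ∩ Q_t is a trimmed tree and [P_s ∩ Q_t]* = [P]* ∩ [Q]*. Consequently, if [P]* and [Q]* are incompatible (their intersection contains no member of V*), then [P]* ∩ [Q]* is countable. -/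
open Set Cardinal

/-! A common member of `[A,α]*` and `[B,β]*` agrees with both `α` and `β` at almost every `n` outside
`A ∪ B`, so `α` and `β` disagree at only finitely many such `n`. Then the intersection is
`[A ∩ B, γ]*` with `γ` equal to `β` on `A` and to `α` elsewhere. If `A ∩ B` is finite this set is
countable; otherwise, cutting both trees below a bound `N` for the disagreements and relabelling
their stems by `γ` turns the intersection of the trees into the trimmed tree `T[(A ∩ B) \ N, γ]`. -/

section TrimmedTrees

variable {X : ℕ → Type}

theorem countable_branches_of_finite [∀ i, Countable (X i)] {S : Set ℕ} (hS : S.Finite)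
    (γ : ∀ i, X i) : (branches X S γ).Countable := by
  have := hS.to_subtype
  have hinj : Function.Injective fun f : branches X S γ => fun i : S => (f : ∀ i, X i) i := by
    intro f g hfg
    ext i
    by_cases hi : i ∈ S
    · exact congrFun hfg ⟨i, hi⟩
    · rw [f.2 i hi, g.2 i hi]
  exact Set.countable_coe_iff.mp hinj.countable

theorem countable_starBranches_of_finite [∀ i, Countable (X i)] {C : Set ℕ} (hC : C.Finite)
    (γ : ∀ i, X i) : (starBranches X C γ).Countable := by
  refine (Set.countable_iUnion fun s : Finset ℕ => countable_branches_of_finite s.finite_toSet γ).mono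
    fun f hf => Set.mem_iUnion.mpr ⟨(hC.union hf).toFinset, fun n hn => ?_⟩
  obtain ⟨hnC, hnE⟩ := not_or.mp (mt (hC.union hf).mem_toFinset.mpr hn)
  by_contra hne
  exact hnE ⟨hnC, hne⟩

theorem starBranches_diff_finite {C S : Set ℕ} (hS : S.Finite) (γ : ∀ i, X i) :
    starBranches X (C \ S) γ = starBranches X C γ := by
  ext f
  refine ⟨fun hf => hf.subset fun n hn => ⟨fun h => hn.1 h.1, hn.2⟩,
    fun hf => (hf.union hS).subset fun n hn => ?_⟩
  by_cases hnS : n ∈ S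
  · exact Or.inr hnS
  · exact Or.inl ⟨fun h => hn.1 ⟨h, hnS⟩, hn.2⟩

theorem finite_disagreement_of_starBranches_inter_nonempty {A B : Set ℕ} {α β : ∀ i, X i}
    (h : (starBranches X A α ∩ starBranches X B β).Nonempty) :
    {n | n ∉ A ∧ n ∉ B ∧ α n ≠ β n}.Finite := by
  obtain ⟨f, hfα, hfβ⟩ := h
  refine (hfα.union hfβ).subset fun n ⟨hnA, hnB, hne⟩ => ?_
  by_cases hfa : f n = α n
  · exact Or.inr ⟨hnB, hfa ▸ hne⟩
  · exact Or.inl ⟨hnA, hfa⟩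

theorem starBranches_inter_eq {A B : Set ℕ} [DecidablePred (· ∈ A)] {α β : ∀ i, X i}
    (hF : {n | n ∉ A ∧ n ∉ B ∧ α n ≠ β n}.Finite) :
    starBranches X A α ∩ starBranches X B β = starBranches X (A ∩ B) (A.piecewise β α) := by
  ext f
  constructor
  · rintro ⟨hfα, hfβ⟩
    refine (hfα.union hfβ).subset fun n ⟨hn, hne⟩ => ?_
    by_cases hnA : n ∈ A
    · exact Or.inr ⟨fun hnB => hn ⟨hnA, hnB⟩, by rwa [A.piecewise_eq_of_mem _ _ hnA] at hne⟩
    · exact Or.inl ⟨hnA, by rwa [A.piecewise_eq_of_notMem _ _ hnA] at hne⟩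
  · intro hf
    refine ⟨hf.subset fun n ⟨hnA, hne⟩ => ?_, (hf.union hF).subset fun n ⟨hnB, hne⟩ => ?_⟩
    · exact ⟨fun h => hnA h.1, by rwa [A.piecewise_eq_of_notMem _ _ hnA]⟩
    · by_cases hnA : n ∈ A
      · exact Or.inl ⟨fun h => hnB h.2, by rwa [A.piecewise_eq_of_mem _ _ hnA]⟩
      by_cases hfa : f n = α n
      · exact Or.inr ⟨hnA, hnB, hfa ▸ hne⟩
      · exact Or.inl ⟨fun h => hnA h.1, by rwa [A.piecewise_eq_of_notMem _ _ hnA]⟩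

theorem branches_congr {A : Set ℕ} {δ γ : ∀ i, X i} (h : ∀ n ∉ A, δ n = γ n) :
    branches X A δ = branches X A γ := by
  ext f
  exact forall₂_congr fun n hn => by rw [h n hn]

theorem branches_inter (A B : Set ℕ) (γ : ∀ i, X i) :
    branches X A γ ∩ branches X B γ = branches X (A ∩ B) γ := by
  ext f
  simp only [branches, Set.mem_inter_iff, Set.mem_ofPred_eq, not_and_or]
  grind

theorem branches_inter_modifySeq {A B : Set ℕ} [DecidablePred (· ∈ A)] {α β : ∀ i, X i} {N : ℕ}
    (hN : ∀ n, N ≤ n → n ∉ A → n ∉ B → α n = β n) :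
    branches X (A \ {i | i < N}) (modifySeq X N (A.piecewise β α) α) ∩
        branches X (B \ {i | i < N}) (modifySeq X N (A.piecewise β α) β) =
      branches X ((A ∩ B) \ {i | i < N}) (A.piecewise β α) := by
  rw [Set.sdiff_inter_distrib_right, ← branches_inter]
  congr 1 <;> refine branches_congr fun n hn => ?_ <;> simp only [modifySeq] <;> split_ifs with hnN
  · rfl
  · exact (A.piecewise_eq_of_notMem _ _ fun hnA => hn ⟨hnA, hnN⟩).symm
  · rfl
  · have hnB : n ∉ B := fun hnB => hn ⟨hnB, hnN⟩
    by_cases hnA : n ∈ A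
    · exact (A.piecewise_eq_of_mem _ _ hnA).symm
    · rw [A.piecewise_eq_of_notMem _ _ hnA, hN n (not_lt.mp hnN) hnA hnB]

end TrimmedTrees

theorem stmt15_general (X : ℕ → Type) [∀ i, Countable (X i)]
    (A B : Set ℕ) (α β : ∀ i, X i) :
    (¬ (starBranches X A α ∩ starBranches X B β).Countable →
      (starBranches X A α ∩ starBranches X B β ∈ treeVstar X ∧
        ∃ (n m : ℕ) (s t : ∀ i, X i) (C : Set ℕ) (γ : ∀ i, X i), C.Infinite ∧
          branches X (A \ {i | i < n}) (modifySeq X n s α) ∩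
              branches X (B \ {i | i < m}) (modifySeq X m t β) = branches X C γ ∧
          starBranches X C γ = starBranches X A α ∩ starBranches X B β)) ∧
    ((∀ U ∈ treeVstar X, ¬ U ⊆ starBranches X A α ∩ starBranches X B β) →
      (starBranches X A α ∩ starBranches X B β).Countable) := by
  classical
  -- an uncountable intersection would be a member of `V*` contained in itself
  refine (fun h => ⟨h, fun hU => not_not.mp fun hI => hU _ (h hI).1 subset_rfl⟩) ?_
  intro hI
  have hF := finite_disagreement_of_starBranches_inter_nonempty
    (Set.nonempty_iff_ne_empty.mpr fun h => hI (h ▸ Set.countable_empty))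
  rw [starBranches_inter_eq hF] at hI ⊢
  have hAB : (A ∩ B).Infinite := fun hfin => hI (countable_starBranches_of_finite hfin _)
  obtain ⟨M, hM⟩ := hF.bddAbove
  have hN : ∀ n, M + 1 ≤ n → n ∉ A → n ∉ B → α n = β n := fun n hn hnA hnB =>
    not_not.mp fun hne => absurd (hM ⟨hnA, hnB, hne⟩) (by omega)
  have hC := hAB.sdiff (Set.finite_lt_nat (M + 1))
  have hstar := starBranches_diff_finite (C := A ∩ B) (Set.finite_lt_nat (M + 1)) (A.piecewise β α)
  exact ⟨⟨_, _, hC, hstar.symm⟩, _, _, _, _, _, _, hC, branches_inter_modifySeq hN, hstar⟩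

theorem stmt15 (X : ℕ → Type) [∀ i, Countable (X i)] [∀ i, Nontrivial (X i)]
    (A B : Set ℕ) (hA : A.Infinite) (hB : B.Infinite) (α β : ∀ i, X i) :
    (¬ (starBranches X A α ∩ starBranches X B β).Countable →
      (starBranches X A α ∩ starBranches X B β ∈ treeVstar X ∧
        ∃ (n m : ℕ) (s t : ∀ i, X i) (C : Set ℕ) (γ : ∀ i, X i), C.Infinite ∧
          branches X (A \ {i | i < n}) (modifySeq X n s α) ∩
              branches X (B \ {i | i < m}) (modifySeq X m t β) = branches X C γ ∧
          starBranches X C γ = starBranches X A α ∩ starBranches X B β)) ∧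
    ((∀ U ∈ treeVstar X, ¬ U ⊆ starBranches X A α ∩ starBranches X B β) →
      (starBranches X A α ∩ starBranches X B β).Countable) :=
  stmt15_general X A B α β
end

section
/- The partial order (V*, ⊆) is separative: if [P]*, [T]* ∈ V* and [P]* is not contained in [T]*, then there exists [Q]* ∈ V* with [Q]* ⊆ [P]* such that [Q]* is incompatible with [T]* (i.e. [Q]* ∩ [T]* contains no member of V*). -/
open Set Cardinal

lemma self_mem_starBranches (X : ℕ → Type) (A : Set ℕ) (α : ∀ i, X i) :
    α ∈ starBranches X A α := by
  simp [starBranches]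

/-- Key lemma: if `[T[D,δ]]* ⊆ [T[B,β]]*` then `D \ B` is finite. -/
lemma key {X : ℕ → Type} [∀ i, Nontrivial (X i)] {D B : Set ℕ} {δ β : ∀ i, X i}
    (h : starBranches X D δ ⊆ starBranches X B β) : (D \ B).Finite := by
  classical
  by_contra hdb
  choose f hf using fun i => exists_ne (β i)
  set γ : ∀ i, X i := fun i => if i ∈ D \ B then f i else δ i with hγ
  have hγU : γ ∈ starBranches X D δ := by
    have : {n | n ∉ D ∧ γ n ≠ δ n} = ∅ := by
      ext n
      simp only [mem_setOf_eq, mem_empty_iff_false, iff_false, not_and, not_not]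
      intro hn
      have : n ∉ D \ B := fun h => hn h.1
      simp only [hγ]; rw [if_neg this]
    rw [starBranches, mem_setOf_eq, this]
    exact finite_empty
  have hγT := h hγU
  apply hdb
  apply hγT.subset
  intro n hn
  refine ⟨hn.2, ?_⟩
  simp only [hγ, if_pos hn]
  exact hf n
theorem stmt16 (X : ℕ → Type) [∀ i, Countable (X i)] [∀ i, Nontrivial (X i)]
    (P T : Set (∀ i, X i)) (hP : P ∈ treeVstar X) (hT : T ∈ treeVstar X)
    (hns : ¬ P ⊆ T) :
    ∃ Q ∈ treeVstar X, Q ⊆ P ∧ ∀ U ∈ treeVstar X, ¬ U ⊆ Q ∩ T := by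
  obtain ⟨A, α, hA, rfl⟩ := hP
  obtain ⟨B, β, hB, rfl⟩ := hT
  by_cases hC : {n | n ∉ A ∧ n ∉ B ∧ α n ≠ β n}.Infinite
  · -- Case 1: Q = P
    refine ⟨starBranches X A α, ⟨A, α, hA, rfl⟩, subset_rfl, ?_⟩
    rintro U ⟨D, δ, hD, rfl⟩ hsub
    have hδ : δ ∈ starBranches X D δ := self_mem_starBranches X D δ
    have hδP : δ ∈ starBranches X A α := (hsub hδ).1
    have hδT : δ ∈ starBranches X B β := (hsub hδ).2
    apply hC
    apply (hδP.union hδT).subset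
    rintro n ⟨hnA, hnB, hne⟩
    by_cases h : δ n = α n
    · exact Or.inr ⟨hnB, h ▸ hne⟩
    · exact Or.inl ⟨hnA, h⟩
  · -- Case 2: A \ B infinite, Q = starBranches (A \ B) α
    rw [not_infinite] at hC
    have hAB : (A \ B).Infinite := by
      intro hfin
      apply hns
      intro γ hγ
      have hγ' : {n | n ∉ A ∧ γ n ≠ α n}.Finite := hγ
      apply ((hfin.union hγ').union hC).subset
      rintro n ⟨hnB, hne⟩
      by_cases hnA : n ∈ A
      · exact Or.inl (Or.inl ⟨hnA, hnB⟩)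
      · by_cases h : γ n = α n
        · exact Or.inr ⟨hnA, hnB, h ▸ hne⟩
        · exact Or.inl (Or.inr ⟨hnA, h⟩)
    refine ⟨starBranches X (A \ B) α, ⟨A \ B, α, hAB, rfl⟩, ?_, ?_⟩
    · intro γ hγ
      have hγ' : {n | n ∉ A \ B ∧ γ n ≠ α n}.Finite := hγ
      apply hγ'.subset
      rintro n ⟨hnA, hne⟩
      exact ⟨fun h => hnA h.1, hne⟩
    · rintro U ⟨D, δ, hD, rfl⟩ hsub
      have h1 : (D \ (A \ B)).Finite := key (fun x hx => (hsub hx).1)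
      have h2 : (D \ B).Finite := key (fun x hx => (hsub hx).2)
      apply hD
      apply (h1.union h2).subset
      intro n hn
      by_cases hnB : n ∈ B
      · exact Or.inl ⟨hn, fun h => h.2 hnB⟩
      · exact Or.inr ⟨hn, hnB⟩
end

section
/- If P is a v-partition (a maximal family of pairwise incompatible members of V*), then the complement ∏X_i ∖ ⋃P belongs to d⁰(V*). -/
open Set Cardinal

/-- Two members of `V*` are compatible if their intersection contains a member of `V*`. -/
def compat (X : ℕ → Type) (U W : Set (∀ i, X i)) : Prop :=
  ∃ S ∈ treeVstar X, S ⊆ U ∩ W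

/-- A `v`-partition: a maximal family of pairwise incompatible members of `V*`. -/
def vPartition (X : ℕ → Type) (P : Set (Set (∀ i, X i))) : Prop :=
  P ⊆ treeVstar X ∧ (P.Pairwise fun U W => ¬ compat X U W) ∧
    ∀ W ∈ treeVstar X, ∃ U ∈ P, compat X U W

theorem stmt18_general (X : ℕ → Type)
    (P : Set (Set (∀ i, X i))) (hP : vPartition X P) :
    (Set.univ \ ⋃₀ P) ∈ d0 (treeVstar X) := by
  intro W hW
  obtain ⟨U, hUP, S, hS, hSUW⟩ := hP.2.2 W hW
  refine ⟨S, hS, fun x hx => (hSUW hx).2, ?_⟩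
  rw [eq_empty_iff_forall_notMem]
  rintro x ⟨hxS, -, hxP⟩
  exact hxP ⟨U, hUP, (hSUW hxS).1⟩

theorem stmt18 (X : ℕ → Type) [∀ i, Countable (X i)] [∀ i, Nontrivial (X i)]
    (P : Set (Set (∀ i, X i))) (hP : vPartition X P) :
    (Set.univ \ ⋃₀ P) ∈ d0 (treeVstar X) :=
  stmt18_general X P hP
end

section
/- If P is a v-partition and S ⊆ ∏X_i is a selector of P (S ∩ C has exactly one point for each C ∈ P), then S ∈ d⁰(V): every member of V* contains a member of V* disjoint from S, hence every member of V contains a member of V disjoint from S. -/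
open Set Cardinal

/-- Split an infinite set of naturals into two disjoint infinite subsets. -/
lemma split_infinite (A : Set ℕ) (hA : A.Infinite) :
    ∃ A₁ A₂ : Set ℕ, A₁ ⊆ A ∧ A₂ ⊆ A ∧ A₁.Infinite ∧ A₂.Infinite ∧
      ∀ n ∈ A₁, n ∉ A₂ := by
  have hA' : (setOf (· ∈ A)).Infinite := hA
  have hinj := Nat.nth_injective hA'
  refine ⟨Set.range (fun k => Nat.nth (· ∈ A) (2 * k)),
          Set.range (fun k => Nat.nth (· ∈ A) (2 * k + 1)), ?_, ?_, ?_, ?_, ?_⟩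
  · rintro n ⟨k, rfl⟩; exact Nat.nth_mem_of_infinite hA' _
  · rintro n ⟨k, rfl⟩; exact Nat.nth_mem_of_infinite hA' _
  · exact Set.infinite_range_of_injective (fun a b h => by
      have := hinj h; omega)
  · exact Set.infinite_range_of_injective (fun a b h => by
      have := hinj h; omega)
  · rintro n ⟨k, rfl⟩ ⟨j, hj⟩
    have := hinj hj; omega

theorem stmt19 (X : ℕ → Type) [∀ i, Countable (X i)] [∀ i, Nontrivial (X i)]
    (P : Set (Set (∀ i, X i))) (hP : vPartition X P)
    (S : Set (∀ i, X i)) (hS : ∀ C ∈ P, ∃! x, x ∈ S ∩ C) :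
    S ∈ d0 (treeVstar X) ∧ S ∈ d0 (treeV X) := by
  constructor
  · -- V* part
    rintro W ⟨A, α, hA, rfl⟩
    classical
    obtain ⟨C, hC, S', hS', hsub⟩ := hP.2.2 _ ⟨A, α, hA, rfl⟩
    obtain ⟨A', α', hA', rfl⟩ := hS'
    obtain ⟨x, hx, hxuniq⟩ := hS C hC
    obtain ⟨A₁, A₂, h₁A, h₂A, h₁inf, h₂inf, hdisj⟩ := split_infinite A' hA'
    set y : ∀ i, X i := fun n => Classical.choose (exists_ne (x n)) with hy
    have hyne : ∀ n, y n ≠ x n := fun n => Classical.choose_spec (exists_ne (x n))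
    set γ : ∀ i, X i := fun n => if n ∈ A₂ then y n else α' n with hγ
    have hUS' : starBranches X A₁ γ ⊆ starBranches X A' α' := by
      intro β hβ
      refine hβ.subset ?_
      rintro n ⟨hn, hne⟩
      refine ⟨fun h => hn (h₁A h), ?_⟩
      have h : γ n = α' n := if_neg (fun h => hn (h₂A h))
      rw [h]; exact hne
    refine ⟨starBranches X A₁ γ, ⟨A₁, γ, h₁inf, rfl⟩,
      fun β hβ => (hsub (hUS' hβ)).2, ?_⟩
    ext β
    simp only [Set.mem_inter_iff, Set.mem_empty_iff_false, iff_false, not_and]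
    intro hβU hβS
    have hβC : β ∈ C := (hsub (hUS' hβU)).1
    have hβx : β = x := hxuniq β ⟨hβS, hβC⟩
    subst hβx
    have : A₂ ⊆ {n | n ∉ A₁ ∧ β n ≠ γ n} := by
      intro n hn
      refine ⟨fun h => hdisj n h hn, ?_⟩
      have : γ n = y n := if_pos hn
      rw [this]; exact fun h => hyne n h.symm
    exact h₂inf (hβU.subset this)
  · -- V part
    rintro W ⟨A, α, hA, rfl⟩
    classical
    obtain ⟨C, hC, S', hS', hsub⟩ := hP.2.2 _ ⟨A, α, hA, rfl⟩
    obtain ⟨A', α', hA', rfl⟩ := hS'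
    obtain ⟨x, hx, hxuniq⟩ := hS C hC
    set y : ∀ i, X i := fun n => Classical.choose (exists_ne (x n)) with hy
    have hyne : ∀ n, y n ≠ x n := fun n => Classical.choose_spec (exists_ne (x n))
    set z : ∀ i, X i := fun n => Classical.choose (exists_ne (α n)) with hz
    have hzne : ∀ n, z n ≠ α n := fun n => Classical.choose_spec (exists_ne (α n))
    -- α' itself is in S', hence in starBranches X A α
    have hα'mem : α' ∈ starBranches X A' α' := by
      have : {n | n ∉ A' ∧ α' n ≠ α' n} = ∅ := by ext n; simp
      simp only [starBranches, Set.mem_setOf_eq, this]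
      exact Set.finite_empty
    have hF : {n | n ∉ A ∧ α' n ≠ α n}.Finite := (hsub hα'mem).2
    -- A' \ A is finite
    have hdiffFin : (A' \ A).Finite := by
      set β : ∀ i, X i := fun n => if n ∈ A' \ A then z n else α' n with hβ
      have hβS' : β ∈ starBranches X A' α' := by
        have : {n | n ∉ A' ∧ β n ≠ α' n} = ∅ := by
          ext n
          simp only [Set.mem_setOf_eq, Set.mem_empty_iff_false, iff_false, not_and]
          intro hn
          have : β n = α' n := if_neg (fun h => hn h.1)
          simp [this]
        simp only [starBranches, Set.mem_setOf_eq, this]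
        exact Set.finite_empty
      have hG : {n | n ∉ A ∧ β n ≠ α n}.Finite := (hsub hβS').2
      refine hG.subset ?_
      rintro n ⟨hn1, hn2⟩
      refine ⟨hn2, ?_⟩
      have : β n = z n := if_pos ⟨hn1, hn2⟩
      rw [this]; exact hzne n
    have hA''inf : (A' ∩ A).Infinite := by
      have : A' ∩ A = A' \ (A' \ A) := by ext n; simp
      rw [this]; exact hA'.diff hdiffFin
    obtain ⟨n₀, hn₀⟩ := hA''inf.nonempty
    have hA₁inf : ((A' ∩ A) \ {n₀}).Infinite := hA''inf.diff (Set.finite_singleton n₀)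
    set γ : ∀ i, X i := fun n =>
      if n = n₀ then y n else if n ∈ A \ A' then α' n else α n with hγ
    have hUS' : branches X ((A' ∩ A) \ {n₀}) γ ⊆ starBranches X A' α' := by
      intro β hβ
      refine hF.subset ?_
      rintro n ⟨hn, hne⟩
      have hnA₁ : n ∉ (A' ∩ A) \ {n₀} := fun h => hn h.1.1
      have hβγ : β n = γ n := hβ n hnA₁
      have hnn₀ : n ≠ n₀ := fun h => hn (h ▸ hn₀.1)
      by_cases hnA : n ∈ A
      · exfalso
        have : γ n = α' n := by
          simp only [hγ]
          rw [if_neg hnn₀, if_pos (show n ∈ A \ A' from ⟨hnA, hn⟩)]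
        rw [hβγ, this] at hne; exact hne rfl
      · have : γ n = α n := by
          simp only [hγ]
          rw [if_neg hnn₀, if_neg (show n ∉ A \ A' from fun h => hnA h.1)]
        refine ⟨hnA, ?_⟩
        rw [hβγ, this] at hne
        exact fun h => hne h.symm
    refine ⟨branches X ((A' ∩ A) \ {n₀}) γ, ⟨_, γ, hA₁inf, rfl⟩, ?_, ?_⟩
    · intro β hβ n hn
      have hnA₁ : n ∉ (A' ∩ A) \ {n₀} := fun h => hn h.1.2
      have hnn₀ : n ≠ n₀ := fun h => hn (h ▸ hn₀.2)
      have : γ n = α n := by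
        simp only [hγ]
        rw [if_neg hnn₀, if_neg (show n ∉ A \ A' from fun h => hn h.1)]
      rw [hβ n hnA₁, this]
    · ext β
      simp only [Set.mem_inter_iff, Set.mem_empty_iff_false, iff_false, not_and]
      intro hβU hβS
      have hβC : β ∈ C := (hsub (hUS' hβU)).1
      have hβx : β = x := hxuniq β ⟨hβS, hβC⟩
      have hn₀A₁ : n₀ ∉ (A' ∩ A) \ {n₀} := by simp
      have h1 : β n₀ = γ n₀ := hβU n₀ hn₀A₁
      have h2 : γ n₀ = y n₀ := if_pos rfl
      rw [hβx, h2] at h1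
      exact hyne n₀ h1.symm
end
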